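/- Let g be a finite-dimensional Lie algebra over a field k of characteristic 0 with nondegenerate Killing form, and let h ∈ g give a short grading g = g(−1) ⊕ g(0) ⊕ g(1), where g(i) = {z ∈ g | [h,z] = 2 i z}. Let e ∈ g(1) satisfy [g(0), e] = g(1). Then z_g(e) ∩ g(−1) = 0 and z_g(e) = (z_g(e) ∩ g(0)) ⊕ g(1). -/

import Mathlib

open Module

section Defs

variable (k : Type*) [Field k] (g : Type*) [LieRing g] [LieAlgebra k g]

/-- The eigenspace of `ad h` with eigenvalue `c`, as a submodule:
`{z ∈ g | [h, z] = c • z}`.  For a short grading, `g(i) = adEigenspace k g h (2 * i)`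
for `i = -1, 0, 1`. -/
def adEigenspace (h : g) (c : k) : Submodule k g where
  carrier := {z | ⁅h, z⁆ = c • z}
  add_mem' {a b} ha hb := by
    simp only [Set.mem_setOf_eq] at ha hb ⊢
    rw [lie_add, ha, hb, smul_add]
  zero_mem' := by simp
  smul_mem' t a ha := by
    simp only [Set.mem_setOf_eq] at ha ⊢
    rw [lie_smul, ha, smul_comm]

end Defs

section Defs2

variable (k : Type*) [Field k] (g : Type*) [LieRing g] [LieAlgebra k g]

/-- The centraliser `z_g(e) = {z ∈ g | [z,e] = 0}` of an element `e`, as a submodule. -/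
def centralizerSubmodule (e : g) : Submodule k g where
  carrier := {z | ⁅z, e⁆ = 0}
  add_mem' {a b} ha hb := by
    simp only [Set.mem_setOf_eq] at ha hb ⊢
    rw [add_lie, ha, hb, add_zero]
  zero_mem' := zero_lie e
  smul_mem' t a ha := by
    simp only [Set.mem_setOf_eq] at ha ⊢
    rw [smul_lie, ha, smul_zero]

/-- Right bracket with `e`, i.e. the linear map `z ↦ [z, e]`. -/
def lieRight (e : g) : g →ₗ[k] g where
  toFun z := ⁅z, e⁆
  map_add' a b := add_lie a b e
  map_smul' t a := by simp [smul_lie]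

end Defs2

/-!
The grading element `h` acts diagonalisably with eigenvalues `-2, 0, 2` only, so `[g(1), e]`,
which lies in the `4`-eigenspace, vanishes. An `x ∈ g(-1)` centralising `e` is Killing-orthogonal
to `g(-1)` and `g(0)` by invariance under `ad h`, and to `g(1) = [g(0), e]` because
`κ(x, [u, e]) = -κ(u, [x, e]) = 0`; nondegeneracy forces `x = 0`. Finally, if `a + b` with
`a ∈ g(-1)`, `b ∈ g(0)` centralises `e`, then `[a, e] ∈ g(0)` and `[b, e] ∈ g(1)` both vanish,
so `a = 0`.
-/

namespace Module.End

variable {R M : Type*} [CommRing R] [IsDomain R] [AddCommGroup M] [Module R M]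
  [IsTorsionFree R M]

theorem eigenspace_eq_bot_of_iSup_eq_top {f : End R M} {s : Set R}
    (hs : ⨆ μ ∈ s, f.eigenspace μ = ⊤) {c : R} (hc : c ∉ s) : f.eigenspace c = ⊥ := by
  refine disjoint_top.mp (hs ▸ (f.eigenspaces_iSupIndep c).mono_right ?_)
  exact biSup_mono fun μ hμ ↦ ne_of_mem_of_not_mem hμ hc

end Module.End

open Module.End LieModule

section adEigenspace

variable {k g : Type*} [Field k] [LieRing g] [LieAlgebra k g] {h : g}

theorem mem_adEigenspace {c : k} {z : g} : z ∈ adEigenspace k g h c ↔ ⁅h, z⁆ = c • z :=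
  Iff.rfl

theorem mem_centralizerSubmodule {e z : g} : z ∈ centralizerSubmodule k g e ↔ ⁅z, e⁆ = 0 :=
  Iff.rfl

theorem adEigenspace_eq_eigenspace (h : g) (c : k) :
    adEigenspace k g h c = (LieAlgebra.ad k g h).eigenspace c := by
  ext z
  simp [mem_adEigenspace]

theorem disjoint_adEigenspace {c d : k} (hcd : c ≠ d) :
    Disjoint (adEigenspace k g h c) (adEigenspace k g h d) := by
  simpa only [adEigenspace_eq_eigenspace] using (eigenspaces_iSupIndep _).pairwiseDisjoint hcd

theorem lie_mem_adEigenspace {c d : k} {a b : g} (ha : a ∈ adEigenspace k g h c)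
    (hb : b ∈ adEigenspace k g h d) : ⁅a, b⁆ ∈ adEigenspace k g h (c + d) := by
  rw [mem_adEigenspace] at *
  rw [leibniz_lie, ha, hb, smul_lie, lie_smul, add_smul]

theorem killingForm_eq_zero_of_mem_adEigenspace [FiniteDimensional k g] {c d : k} {a b : g}
    (ha : a ∈ adEigenspace k g h c) (hb : b ∈ adEigenspace k g h d) (hcd : c + d ≠ 0) :
    killingForm k g a b = 0 := by
  have hskew : killingForm k g ⁅h, a⁆ b = -killingForm k g a ⁅h, b⁆ :=
    traceForm_apply_lie_apply' k g g h a b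
  rw [mem_adEigenspace.mp ha, mem_adEigenspace.mp hb] at hskew
  simp only [map_smul, LinearMap.smul_apply, smul_eq_mul] at hskew
  have : (c + d) * killingForm k g a b = 0 := by linear_combination hskew
  exact (mul_eq_zero.mp this).resolve_left hcd

end adEigenspace

section ShortGrading

variable {k g : Type*} [Field k] [LieRing g] [LieAlgebra k g] {h e : g}

theorem adEigenspace_eq_bot_of_short_grading
    (hgrad : adEigenspace k g h (-2) ⊔ adEigenspace k g h 0 ⊔ adEigenspace k g h 2 = ⊤)
    {c : k} (h₁ : c ≠ -2) (h₂ : c ≠ 0) (h₃ : c ≠ 2) : adEigenspace k g h c = ⊥ := by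
  simp only [adEigenspace_eq_eigenspace] at hgrad ⊢
  refine eigenspace_eq_bot_of_iSup_eq_top (s := {-2, 0, 2}) ?_ (by simp [h₁, h₂, h₃])
  simpa only [iSup_insert, iSup_singleton, sup_assoc] using hgrad

theorem adEigenspace_two_le_centralizer [CharZero k]
    (hgrad : adEigenspace k g h (-2) ⊔ adEigenspace k g h 0 ⊔ adEigenspace k g h 2 = ⊤)
    (he : e ∈ adEigenspace k g h 2) : adEigenspace k g h 2 ≤ centralizerSubmodule k g e := by
  intro y hy
  have h4 := lie_mem_adEigenspace hy he
  rwa [adEigenspace_eq_bot_of_short_grading hgrad (by norm_num) (by norm_num) (by norm_num),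
    Submodule.mem_bot] at h4

theorem centralizer_inf_adEigenspace_neg_two_eq_bot [CharZero k] [FiniteDimensional k g]
    (hkill : (killingForm k g).Nondegenerate)
    (hgrad : adEigenspace k g h (-2) ⊔ adEigenspace k g h 0 ⊔ adEigenspace k g h 2 = ⊤)
    (hdense : Submodule.map (lieRight k g e) (adEigenspace k g h 0) = adEigenspace k g h 2) :
    centralizerSubmodule k g e ⊓ adEigenspace k g h (-2) = ⊥ := by
  refine eq_bot_iff.mpr fun x ⟨hxe, hx⟩ ↦ (Submodule.mem_bot k).mpr <| hkill.1 x fun y ↦ ?_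
  suffices ⊤ ≤ LinearMap.ker (killingForm k g x) from this Submodule.mem_top
  rw [← hgrad]
  refine sup_le (sup_le ?_ ?_) ?_
  · exact fun y hy ↦ killingForm_eq_zero_of_mem_adEigenspace hx hy (by norm_num)
  · exact fun y hy ↦ killingForm_eq_zero_of_mem_adEigenspace hx hy (by norm_num)
  · rw [← hdense]
    rintro - ⟨u, -, rfl⟩
    calc killingForm k g x ⁅u, e⁆ = killingForm k g ⁅x, u⁆ e :=
          (traceForm_apply_lie_apply k g g x u e).symm
      _ = -killingForm k g u ⁅x, e⁆ := traceForm_apply_lie_apply' k g g x u e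
      _ = 0 := by rw [mem_centralizerSubmodule.mp hxe, map_zero, neg_zero]

theorem centralizer_inf_sup_adEigenspace_le [CharZero k] (he : e ∈ adEigenspace k g h 2)
    (hneg : centralizerSubmodule k g e ⊓ adEigenspace k g h (-2) = ⊥) :
    centralizerSubmodule k g e ⊓ (adEigenspace k g h (-2) ⊔ adEigenspace k g h 0) ≤
      centralizerSubmodule k g e ⊓ adEigenspace k g h 0 := by
  rintro z ⟨hze, hz⟩
  obtain ⟨a, ha, b, hb, rfl⟩ := Submodule.mem_sup.mp hz
  have hae : ⁅a, e⁆ ∈ adEigenspace k g h 0 := by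
    simpa using lie_mem_adEigenspace ha he
  have hbe : ⁅b, e⁆ ∈ adEigenspace k g h 2 := by
    simpa using lie_mem_adEigenspace hb he
  have hsum : ⁅a, e⁆ + ⁅b, e⁆ = 0 := (add_lie a b e).symm.trans hze
  have hb0 : ⁅b, e⁆ = 0 := by
    refine Submodule.disjoint_def.mp (disjoint_adEigenspace two_ne_zero.symm) _ ?_ hbe
    simpa [neg_eq_of_add_eq_zero_right hsum] using neg_mem hae
  have ha0 : a = 0 := by
    have : a ∈ centralizerSubmodule k g e ⊓ adEigenspace k g h (-2) :=
      ⟨mem_centralizerSubmodule.mpr (by simpa only [hb0, add_zero] using hsum), ha⟩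
    simpa [hneg] using this
  subst ha0
  simpa using ⟨hb0, hb⟩

theorem centralizer_eq_inf_adEigenspace_zero_sup [CharZero k]
    (hgrad : adEigenspace k g h (-2) ⊔ adEigenspace k g h 0 ⊔ adEigenspace k g h 2 = ⊤)
    (he : e ∈ adEigenspace k g h 2)
    (hneg : centralizerSubmodule k g e ⊓ adEigenspace k g h (-2) = ⊥) :
    centralizerSubmodule k g e =
      (centralizerSubmodule k g e ⊓ adEigenspace k g h 0) ⊔ adEigenspace k g h 2 := by
  have h2 := adEigenspace_two_le_centralizer hgrad he
  refine le_antisymm ?_ (sup_le inf_le_left h2)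
  calc centralizerSubmodule k g e
      = centralizerSubmodule k g e ⊓
          (adEigenspace k g h (-2) ⊔ adEigenspace k g h 0 ⊔ adEigenspace k g h 2) := by
        rw [hgrad, inf_top_eq]
    _ ≤ centralizerSubmodule k g e ⊓ (adEigenspace k g h (-2) ⊔ adEigenspace k g h 0) ⊔
          adEigenspace k g h 2 := inf_sup_le_assoc_of_le _ h2
    _ ≤ (centralizerSubmodule k g e ⊓ adEigenspace k g h 0) ⊔ adEigenspace k g h 2 :=
        sup_le_sup_right (centralizer_inf_sup_adEigenspace_le he hneg) _

end ShortGrading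

/-- Let `g` be a finite-dimensional Lie algebra over a field `k` of
characteristic 0 with nondegenerate Killing form, with a short grading
`g = g(-1) ⊕ g(0) ⊕ g(1)` given by `h ∈ g`, where `g(i) = {z | [h,z] = 2 i z}`.
Let `e ∈ g(1)` satisfy `[g(0), e] = g(1)`.  Then `z_g(e) ∩ g(-1) = 0` and
`z_g(e) = (z_g(e) ∩ g(0)) ⊕ g(1)`. -/
theorem centralizer_of_dense_orbit_element
    (k : Type*) [Field k] [CharZero k]
    (g : Type*) [LieRing g] [LieAlgebra k g] [FiniteDimensional k g]
    (hkill : (killingForm k g).Nondegenerate)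
    (h e : g)
    (hgrad : DirectSum.IsInternal
      ![adEigenspace k g h (-2), adEigenspace k g h 0, adEigenspace k g h 2])
    (he : e ∈ adEigenspace k g h 2)
    (hdense : Submodule.map (lieRight k g e) (adEigenspace k g h 0)
      = adEigenspace k g h 2) :
    centralizerSubmodule k g e ⊓ adEigenspace k g h (-2) = ⊥ ∧
      centralizerSubmodule k g e
        = (centralizerSubmodule k g e ⊓ adEigenspace k g h 0) ⊔ adEigenspace k g h 2 ∧
      Disjoint (centralizerSubmodule k g e ⊓ adEigenspace k g h 0)
        (adEigenspace k g h 2) := by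
  have hsup : adEigenspace k g h (-2) ⊔ adEigenspace k g h 0 ⊔ adEigenspace k g h 2 = ⊤ := by
    simpa using hgrad.submodule_iSup_eq_top
  have hneg := centralizer_inf_adEigenspace_neg_two_eq_bot hkill hsup hdense
  exact ⟨hneg, centralizer_eq_inf_adEigenspace_zero_sup hsup he hneg,
    (disjoint_adEigenspace two_ne_zero.symm).mono_left inf_le_right⟩
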